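/- For any bipartite density operator ρ^{AB} on a finite-dimensional Hilbert space, the conditional min-entropy satisfies H_min(A|B)_ρ ≤ S(A|B)_ρ = S(AB)_ρ − S(B)_ρ; equivalently, whenever ρ^{AB} ≤ 2^{-λ} 𝟙_A ⊗ σ^B for a density operator σ^B, then λ ≤ S(AB)_ρ − S(B)_ρ. -/

import Mathlib

open scoped Kronecker ComplexOrder

/-- The positive semidefinite square root of a positive semidefinite matrix
(the definition Mathlib had, since removed). -/
noncomputable def Matrix.PosSemidef.sqrt {n 𝕜 : Type*} [Fintype n] [DecidableEq n] [RCLike 𝕜]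
    {A : Matrix n n 𝕜} (hA : A.PosSemidef) : Matrix n n 𝕜 :=
  hA.1.eigenvectorUnitary.1 * Matrix.diagonal ((↑) ∘ (√·) ∘ hA.1.eigenvalues) *
  (star hA.1.eigenvectorUnitary : Matrix n n 𝕜)
/-- Trace (Schatten-1) norm of a square complex matrix: `‖A‖₁ = Tr √(AᴴA)`. -/
noncomputable def traceNorm {n : Type*} [Fintype n] [DecidableEq n]
    (A : Matrix n n ℂ) : ℝ :=
  ((Matrix.posSemidef_conjTranspose_mul_self A).sqrt).trace.re

/-- Positive-semidefinite square root (junk value `0` off the PSD cone). -/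
noncomputable def matSqrt {n : Type*} [Fintype n] [DecidableEq n]
    (A : Matrix n n ℂ) : Matrix n n ℂ := by
  classical exact if h : A.PosSemidef then h.sqrt else 0

/-- Von Neumann entropy (base 2), via the eigenvalues of a Hermitian matrix
(junk value `0` for non-Hermitian input); `0 log 0 = 0`. -/
noncomputable def vnEntropy {n : Type*} [Fintype n] [DecidableEq n]
    (A : Matrix n n ℂ) : ℝ := by
  classical exact
    if h : A.IsHermitian then
      -∑ i, (h.eigenvalues i) * Real.logb 2 (h.eigenvalues i)
    else 0

/-- Conditional min-entropy `H_min(A|B)_ρ` of a bipartite (possibly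
subnormalized) state on `a × b`:
`max {λ | ρ ≤ 2^{-λ} 𝟙_A ⊗ σ_B for some subnormalized density operator σ_B}`. -/
noncomputable def Hmin {a b : Type*} [Fintype a] [DecidableEq a]
    [Fintype b] [DecidableEq b] (ρ : Matrix (a × b) (a × b) ℂ) : ℝ :=
  sSup {lam : ℝ | ∃ σ : Matrix b b ℂ, σ.PosSemidef ∧ σ.trace.re ≤ 1 ∧
    (((2 : ℝ) ^ (-lam)) • ((1 : Matrix a a ℂ) ⊗ₖ σ) - ρ).PosSemidef}

/-- Generalized fidelity `F(ρ,σ) = ‖√ρ√σ‖₁ + √((1−Tr ρ)(1−Tr σ))`. -/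
noncomputable def gFidelity {n : Type*} [Fintype n] [DecidableEq n]
    (ρ σ : Matrix n n ℂ) : ℝ :=
  traceNorm (matSqrt ρ * matSqrt σ) +
    Real.sqrt ((1 - ρ.trace.re) * (1 - σ.trace.re))

/-- Purified distance `P(ρ,σ) = √(1 − F(ρ,σ)²)`. -/
noncomputable def purifiedDist {n : Type*} [Fintype n] [DecidableEq n]
    (ρ σ : Matrix n n ℂ) : ℝ :=
  Real.sqrt (1 - (gFidelity ρ σ) ^ 2)

/-- Smooth conditional min-entropy `H_min^ε(A|B)_ρ`: supremum of `H_min(A|B)`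
over subnormalized states within purified distance `ε` of `ρ`. -/
noncomputable def smoothHmin {a b : Type*} [Fintype a] [DecidableEq a]
    [Fintype b] [DecidableEq b] (ε : ℝ) (ρ : Matrix (a × b) (a × b) ℂ) : ℝ :=
  sSup {h : ℝ | ∃ ρ' : Matrix (a × b) (a × b) ℂ, ρ'.PosSemidef ∧
    ρ'.trace.re ≤ 1 ∧ purifiedDist ρ ρ' ≤ ε ∧ h = Hmin ρ'}


namespace HminAux

open Matrix Complex

/-- scalar Klein-type lemma -/
lemma scalar_klein {ι κ : Type*} [Fintype ι] [Fintype κ]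
    (p : ι → ℝ) (t : κ → ℝ) (c : ι → κ → ℝ)
    (hp : ∀ i, 0 ≤ p i) (ht : ∀ ξ, 0 < t ξ) (hc : ∀ i ξ, 0 ≤ c i ξ)
    (hrow : ∀ i, ∑ ξ, c i ξ = 1)
    (hq : ∀ i, p i * ∑ ξ, c i ξ / t ξ ≤ 1) :
    ∑ i, p i * Real.log (p i) ≤ ∑ ξ, (∑ i, p i * c i ξ) * Real.log (t ξ) := by
  have key : ∀ i, p i * Real.log (p i) ≤
      ∑ ξ, (p i * c i ξ) * Real.log (t ξ) := by
    intro i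
    rcases eq_or_lt_of_le (hp i) with h0 | h0
    · simp [← h0]
    · -- p i > 0
      have h1 : ∀ ξ, (p i * c i ξ) * (Real.log (p i) - Real.log (t ξ))
          ≤ (p i * c i ξ) * (p i / t ξ - 1) := by
        intro ξ
        apply mul_le_mul_of_nonneg_left _ (mul_nonneg (hp i) (hc i ξ))
        have := Real.log_le_sub_one_of_pos (x := p i / t ξ)
          (div_pos h0 (ht ξ))
        rw [Real.log_div (ne_of_gt h0) (ne_of_gt (ht ξ))] at this
        linarith
      have h2 := Finset.sum_le_sum (fun ξ (_ : ξ ∈ Finset.univ) => h1 ξ)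
      have e1 : ∑ ξ, (p i * c i ξ) * (Real.log (p i) - Real.log (t ξ))
          = p i * Real.log (p i) - ∑ ξ, (p i * c i ξ) * Real.log (t ξ) := by
        simp_rw [mul_sub, Finset.sum_sub_distrib, ← Finset.sum_mul, ← Finset.mul_sum, hrow i,
          mul_one]
      have e2 : ∑ ξ, (p i * c i ξ) * (p i / t ξ - 1)
          = p i * (p i * ∑ ξ, c i ξ / t ξ) - p i := by
        have : ∀ ξ, (p i * c i ξ) * (p i / t ξ - 1)
            = p i * (p i * (c i ξ / t ξ)) - p i * c i ξ := fun ξ => by ring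
        simp_rw [this, Finset.sum_sub_distrib, ← Finset.mul_sum, hrow i, mul_one]
      rw [e1] at h2; rw [e2] at h2
      nlinarith [hq i, hp i]
  calc ∑ i, p i * Real.log (p i) ≤ ∑ i, ∑ ξ, (p i * c i ξ) * Real.log (t ξ) :=
        Finset.sum_le_sum fun i _ => key i
    _ = ∑ ξ, (∑ i, p i * c i ξ) * Real.log (t ξ) := by
        rw [Finset.sum_comm]; congr 1; funext ξ; rw [Finset.sum_mul]

/-- scalar Gibbs lemma -/
lemma scalar_gibbs {ι κ : Type*} [Fintype ι] [Fintype κ]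
    (r : ι → ℝ) (s : κ → ℝ) (c : ι → κ → ℝ)
    (hr : ∀ i, 0 ≤ r i) (hs : ∀ ξ, 0 < s ξ) (hc : ∀ i ξ, 0 ≤ c i ξ)
    (hrow : ∀ i, ∑ ξ, c i ξ = 1) (hcol : ∀ ξ, ∑ i, c i ξ = 1)
    (hsum : ∑ ξ, s ξ ≤ ∑ i, r i) :
    ∑ ξ, (∑ i, r i * c i ξ) * Real.log (s ξ) ≤ ∑ i, r i * Real.log (r i) := by
  have key : ∀ i ξ, (r i * c i ξ) * (Real.log (s ξ) - Real.log (r i))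
      ≤ c i ξ * (s ξ - r i) := by
    intro i ξ
    rcases eq_or_lt_of_le (hr i) with h0 | h0
    · rw [← h0]
      simpa using mul_nonneg (hc i ξ) (hs ξ).le
    · have hl : Real.log (s ξ) - Real.log (r i) ≤ s ξ / r i - 1 := by
        have := Real.log_le_sub_one_of_pos (x := s ξ / r i) (div_pos (hs ξ) h0)
        rw [Real.log_div (ne_of_gt (hs ξ)) (ne_of_gt h0)] at this
        linarith
      calc (r i * c i ξ) * (Real.log (s ξ) - Real.log (r i))
          ≤ (r i * c i ξ) * (s ξ / r i - 1) :=
            mul_le_mul_of_nonneg_left hl (mul_nonneg (hr i) (hc i ξ))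
        _ = c i ξ * (s ξ - r i) := by field_simp
  have h2 : ∑ i, ∑ ξ, (r i * c i ξ) * (Real.log (s ξ) - Real.log (r i))
      ≤ ∑ i, ∑ ξ, c i ξ * (s ξ - r i) :=
    Finset.sum_le_sum fun i _ => Finset.sum_le_sum fun ξ _ => key i ξ
  have e3 : ∑ i, ∑ ξ, c i ξ * (s ξ - r i) = ∑ ξ, s ξ - ∑ i, r i := by
    simp_rw [mul_sub, Finset.sum_sub_distrib, ← Finset.sum_mul]
    congr 1
    · rw [Finset.sum_comm]
      congr 1; funext ξ; rw [← Finset.sum_mul, hcol, one_mul]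
    · congr 1; funext i; rw [hrow, one_mul]
  have e4 : ∑ i, ∑ ξ, (r i * c i ξ) * (Real.log (s ξ) - Real.log (r i))
      = ∑ ξ, (∑ i, r i * c i ξ) * Real.log (s ξ) - ∑ i, r i * Real.log (r i) := by
    simp_rw [mul_sub, Finset.sum_sub_distrib, ← Finset.sum_mul, ← Finset.mul_sum, hrow, mul_one]
    congr 1
    rw [Finset.sum_comm]
    congr 1; funext ξ; rw [Finset.sum_mul]
  rw [e4, e3] at h2
  linarith


set_option linter.unusedSectionVars false

variable {n : Type*} [Fintype n] [DecidableEq n]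

lemma star_dot_U (U : Matrix n n ℂ) (v w : n → ℂ) :
    dotProduct (star v) (U *ᵥ w)
      = dotProduct (star (Uᴴ *ᵥ v)) w := by
  rw [Matrix.star_mulVec, Matrix.conjTranspose_conjTranspose, Matrix.dotProduct_mulVec]

lemma rep_quad (U : Matrix n n ℂ) (d : n → ℝ) (M : Matrix n n ℂ)
    (hM : M = U * Matrix.diagonal (fun i => (d i : ℂ)) * Uᴴ) (v : n → ℂ) :
    dotProduct (star v) (M *ᵥ v)
      = ∑ i, (d i : ℂ) * Complex.normSq ((Uᴴ *ᵥ v) i) := by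
  subst hM
  rw [← Matrix.mulVec_mulVec, ← Matrix.mulVec_mulVec, star_dot_U]
  rw [dotProduct]
  congr 1
  funext i
  rw [Matrix.mulVec_diagonal, Pi.star_apply, Complex.normSq_eq_conj_mul_self,
    Complex.star_def]
  ring

lemma rep_mulVec (U : Matrix n n ℂ) (hU : Uᴴ * U = 1) (d : n → ℝ) (M : Matrix n n ℂ)
    (hM : M = U * Matrix.diagonal (fun i => (d i : ℂ)) * Uᴴ) (z : n → ℂ) :
    M *ᵥ (U *ᵥ z) = U *ᵥ (fun i => (d i : ℂ) * z i) := by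
  subst hM
  rw [Matrix.mulVec_mulVec, Matrix.mul_assoc, Matrix.mul_assoc, hU, Matrix.mul_one,
    ← Matrix.mulVec_mulVec]
  have : (Matrix.diagonal fun i => (d i : ℂ)) *ᵥ z = fun i => (d i : ℂ) * z i := by
    funext i; rw [Matrix.mulVec_diagonal]
  rw [this]

lemma unitary_row_sum (N : Matrix n n ℂ) (hN : N * Nᴴ = 1) (i : n) :
    ∑ ξ, Complex.normSq (N i ξ) = 1 := by
  have h := congrArg (fun M : Matrix n n ℂ => M i i) hN
  simp only [Matrix.mul_apply, Matrix.conjTranspose_apply, Matrix.one_apply_eq] at h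
  have : ((∑ ξ, Complex.normSq (N i ξ) : ℝ) : ℂ) = 1 := by
    push_cast
    rw [← h]
    congr 1; funext ξ
    rw [← Complex.mul_conj]
    rfl
  exact_mod_cast this

lemma unitary_col_sum (N : Matrix n n ℂ) (hN : Nᴴ * N = 1) (ξ : n) :
    ∑ i, Complex.normSq (N i ξ) = 1 := by
  have := unitary_row_sum Nᴴ (by rw [Matrix.conjTranspose_conjTranspose, hN]) ξ
  simpa [Matrix.conjTranspose_apply, Complex.normSq_conj] using this

/-- spectral decomposition in our preferred form -/
lemma spec_decomp {M : Matrix n n ℂ} (hM : M.IsHermitian) :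
    M = (hM.eigenvectorUnitary : Matrix n n ℂ)
        * Matrix.diagonal (fun i => (hM.eigenvalues i : ℂ))
        * (hM.eigenvectorUnitary : Matrix n n ℂ)ᴴ := by
  have := hM.spectral_theorem
  rw [Unitary.conjStarAlgAut_apply, Matrix.star_eq_conjTranspose] at this
  exact this

lemma mulVec_single_one (U : Matrix n n ℂ) (i : n) :
    U *ᵥ Pi.single i 1 = fun m => U m i := by
  funext m
  simp [Matrix.mulVec_single]

lemma dot_single (U : Matrix n n ℂ) (i : n) (w : n → ℂ) :
    dotProduct (star (U *ᵥ Pi.single i 1)) w = (Uᴴ *ᵥ w) i := by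
  rw [mulVec_single_one]
  simp [dotProduct, Matrix.mulVec, Matrix.conjTranspose_apply]

lemma dot_conj (a b : n → ℂ) :
    dotProduct (star a) b
      = starRingEnd ℂ (dotProduct (star b) a) := by
  simp only [dotProduct, Pi.star_apply, map_sum, _root_.map_mul, Complex.star_def,
    Complex.conj_conj]
  congr 1; funext i; ring

lemma rep_quad_re (U : Matrix n n ℂ) (d : n → ℝ) (M : Matrix n n ℂ)
    (hM : M = U * Matrix.diagonal (fun i => (d i : ℂ)) * Uᴴ) (v : n → ℂ) :
    (dotProduct (star v) (M *ᵥ v)).re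
      = ∑ i, d i * Complex.normSq ((Uᴴ *ᵥ v) i) := by
  rw [rep_quad U d M hM v]
  simp_rw [← Complex.ofReal_mul, ← Complex.ofReal_sum, Complex.ofReal_re]

/-- The key inequality: `Tr ρ log ρ ≤ ∑_ξ ⟨x_ξ|ρ|x_ξ⟩ log t_ξ` when `ρ ≤ τ`. -/
lemma main_ineq {M τ : Matrix n n ℂ} (hM : M.PosSemidef)
    (W : Matrix n n ℂ) (hW1 : Wᴴ * W = 1) (hW2 : W * Wᴴ = 1)
    (t : n → ℝ) (ht : ∀ ξ, 0 < t ξ)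
    (hτ : τ = W * Matrix.diagonal (fun ξ => (t ξ : ℂ)) * Wᴴ)
    (hle : ∀ v : n → ℂ, (dotProduct (star v) (M *ᵥ v)).re
      ≤ (dotProduct (star v) (τ *ᵥ v)).re) :
    ∑ i, hM.1.eigenvalues i * Real.log (hM.1.eigenvalues i)
      ≤ ∑ ξ, (dotProduct (star (W *ᵥ Pi.single ξ 1))
          (M *ᵥ (W *ᵥ Pi.single ξ 1))).re * Real.log (t ξ) := by
  classical
  set U : Matrix n n ℂ := (hM.1.eigenvectorUnitary : Matrix n n ℂ) with hUdef
  have hU1 : Uᴴ * U = 1 := by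
    rw [← Matrix.star_eq_conjTranspose]
    exact Matrix.mem_unitaryGroup_iff'.mp hM.1.eigenvectorUnitary.2
  have hU2 : U * Uᴴ = 1 := by
    rw [← Matrix.star_eq_conjTranspose]
    exact Matrix.mem_unitaryGroup_iff.mp hM.1.eigenvectorUnitary.2
  set p : n → ℝ := hM.1.eigenvalues with hpdef
  have hspec : M = U * Matrix.diagonal (fun i => (p i : ℂ)) * Uᴴ := spec_decomp hM.1
  set N : Matrix n n ℂ := Uᴴ * W with hNdef
  have hN1 : N * Nᴴ = 1 := by
    rw [hNdef, Matrix.conjTranspose_mul, Matrix.conjTranspose_conjTranspose,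
      Matrix.mul_assoc, ← Matrix.mul_assoc W, hW2, Matrix.one_mul, hU1]
  have hN2 : Nᴴ * N = 1 := by
    rw [hNdef, Matrix.conjTranspose_mul, Matrix.conjTranspose_conjTranspose,
      Matrix.mul_assoc, ← Matrix.mul_assoc U, hU2, Matrix.one_mul, hW1]
  set c : n → n → ℝ := fun i ξ => Complex.normSq (N i ξ) with hcdef
  have hp : ∀ i, 0 ≤ p i := fun i => hM.eigenvalues_nonneg i
  have hc : ∀ i ξ, 0 ≤ c i ξ := fun i ξ => Complex.normSq_nonneg _
  have hrow : ∀ i, ∑ ξ, c i ξ = 1 := fun i => unitary_row_sum N hN1 i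
  -- coordinates of x_ξ in eigenbasis of M
  have hcoord : ∀ ξ i, (Uᴴ *ᵥ (W *ᵥ Pi.single ξ 1)) i = N i ξ := by
    intro ξ i
    rw [Matrix.mulVec_mulVec, ← hNdef, mulVec_single_one]
  -- the diagonal matrix elements
  have hdiag : ∀ ξ, (dotProduct (star (W *ᵥ Pi.single ξ 1))
      (M *ᵥ (W *ᵥ Pi.single ξ 1))).re = ∑ i, p i * c i ξ := by
    intro ξ
    rw [rep_quad_re U p M hspec]
    congr 1; funext i; rw [hcoord ξ i]
  -- the quadratic bound
  have hq : ∀ i, p i * ∑ ξ, c i ξ / t ξ ≤ 1 := by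
    intro i
    set q : ℝ := ∑ ξ, c i ξ / t ξ with hqdef
    have hqnn : 0 ≤ q := Finset.sum_nonneg fun ξ _ =>
      div_nonneg (hc i ξ) (ht ξ).le
    set z : n → ℂ := fun ξ => (((t ξ)⁻¹ : ℝ) : ℂ) * starRingEnd ℂ (N i ξ) with hzdef
    set w : n → ℂ := W *ᵥ z with hwdef
    set u : n → ℂ := U *ᵥ Pi.single i 1 with hudef
    -- τ *ᵥ w = u
    have hτw : τ *ᵥ w = u := by
      rw [hwdef, rep_mulVec W hW1 t τ hτ z]
      have h1 : (fun ξ => (t ξ : ℂ) * z ξ) = fun ξ => starRingEnd ℂ (N i ξ) := by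
        funext ξ
        show (t ξ : ℂ) * ((((t ξ)⁻¹ : ℝ) : ℂ) * starRingEnd ℂ (N i ξ)) = _
        have htξ : (t ξ : ℝ) ≠ 0 := (ht ξ).ne'
        push_cast
        field_simp
      rw [h1]
      have h2 : (fun ξ => starRingEnd ℂ (N i ξ)) = (Wᴴ * U) *ᵥ Pi.single i 1 := by
        funext ξ
        rw [mulVec_single_one]
        rw [hNdef]
        simp [Matrix.mul_apply, Matrix.conjTranspose_apply, map_sum, mul_comm]
      rw [h2, hudef, Matrix.mulVec_mulVec, ← Matrix.mul_assoc, hW2, Matrix.one_mul]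
    -- ⟨u, w⟩ = q
    have hinner : (Uᴴ *ᵥ w) i = (q : ℂ) := by
      rw [hwdef, Matrix.mulVec_mulVec, ← hNdef]
      show dotProduct (N i) z = _
      rw [dotProduct, hqdef]
      push_cast
      congr 1; funext ξ
      show N i ξ * ((((t ξ)⁻¹ : ℝ) : ℂ) * starRingEnd ℂ (N i ξ)) = _
      rw [show c i ξ = Complex.normSq (N i ξ) from rfl, div_eq_mul_inv]
      push_cast
      rw [← Complex.mul_conj]
      ring
    have hwM : p i * q ^ 2 ≤ (dotProduct (star w) (M *ᵥ w)).re := by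
      rw [rep_quad_re U p M hspec w]
      have h5 : p i * Complex.normSq ((Uᴴ *ᵥ w) i)
          ≤ ∑ m, p m * Complex.normSq ((Uᴴ *ᵥ w) m) :=
        Finset.single_le_sum (f := fun m => p m * Complex.normSq ((Uᴴ *ᵥ w) m))
          (fun m _ => mul_nonneg (hp m) (Complex.normSq_nonneg _)) (Finset.mem_univ i)
      rw [hinner] at h5
      simpa [Complex.normSq_ofReal, sq] using h5
    have hwτ : (dotProduct (star w) (τ *ᵥ w)).re = q := by
      rw [hτw, dot_conj]
      have h6 : dotProduct (star u) w = (Uᴴ *ᵥ w) i := by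
        rw [hudef]; exact dot_single U i w
      rw [h6, hinner]
      simp
    have hchain : p i * q ^ 2 ≤ q := by
      calc p i * q ^ 2 ≤ (dotProduct (star w) (M *ᵥ w)).re := hwM
        _ ≤ (dotProduct (star w) (τ *ᵥ w)).re := hle w
        _ = q := hwτ
    rcases eq_or_lt_of_le hqnn with h0 | h0
    · rw [← h0]; norm_num
    · nlinarith
  have := scalar_klein p t c hp ht hc hrow hq
  calc ∑ i, p i * Real.log (p i)
      ≤ ∑ ξ, (∑ i, p i * c i ξ) * Real.log (t ξ) := this
    _ = _ := by
        congr 1; funext ξ; rw [hdiag ξ]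

lemma eigU_mul_star {M : Matrix n n ℂ} (hM : M.IsHermitian) :
    (hM.eigenvectorUnitary : Matrix n n ℂ) * (hM.eigenvectorUnitary : Matrix n n ℂ)ᴴ = 1 := by
  rw [← Matrix.star_eq_conjTranspose]
  exact Matrix.mem_unitaryGroup_iff.mp hM.eigenvectorUnitary.2

lemma star_mul_eigU {M : Matrix n n ℂ} (hM : M.IsHermitian) :
    (hM.eigenvectorUnitary : Matrix n n ℂ)ᴴ * (hM.eigenvectorUnitary : Matrix n n ℂ) = 1 := by
  rw [← Matrix.star_eq_conjTranspose]
  exact Matrix.mem_unitaryGroup_iff'.mp hM.eigenvectorUnitary.2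

lemma trace_eq_sum_eig {M : Matrix n n ℂ} (hM : M.IsHermitian) :
    M.trace = ∑ i, (hM.eigenvalues i : ℂ) := by
  conv_lhs => rw [spec_decomp hM]
  rw [Matrix.trace_mul_cycle, star_mul_eigU hM, Matrix.one_mul,
    Matrix.trace_diagonal]

/-- Gibbs inequality, matrix level. -/
lemma gibbs_ineq {B : Matrix n n ℂ} (hB : B.PosSemidef) (V : Matrix n n ℂ)
    (hV1 : Vᴴ * V = 1) (hV2 : V * Vᴴ = 1) (s : n → ℝ) (hs : ∀ j, 0 < s j)
    (hsum : ∑ j, s j ≤ ∑ k, hB.1.eigenvalues k) :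
    ∑ j, (dotProduct (star (V *ᵥ Pi.single j 1))
        (B *ᵥ (V *ᵥ Pi.single j 1))).re * Real.log (s j)
      ≤ ∑ k, hB.1.eigenvalues k * Real.log (hB.1.eigenvalues k) := by
  classical
  set U : Matrix n n ℂ := (hB.1.eigenvectorUnitary : Matrix n n ℂ) with hUdef
  have hU1 : Uᴴ * U = 1 := star_mul_eigU hB.1
  have hU2 : U * Uᴴ = 1 := eigU_mul_star hB.1
  set r : n → ℝ := hB.1.eigenvalues with hrdef
  have hspec : B = U * Matrix.diagonal (fun i => (r i : ℂ)) * Uᴴ := spec_decomp hB.1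
  set N : Matrix n n ℂ := Uᴴ * V with hNdef
  have hN1 : N * Nᴴ = 1 := by
    rw [hNdef, Matrix.conjTranspose_mul, Matrix.conjTranspose_conjTranspose,
      Matrix.mul_assoc, ← Matrix.mul_assoc V, hV2, Matrix.one_mul, hU1]
  have hN2 : Nᴴ * N = 1 := by
    rw [hNdef, Matrix.conjTranspose_mul, Matrix.conjTranspose_conjTranspose,
      Matrix.mul_assoc, ← Matrix.mul_assoc U, hU2, Matrix.one_mul, hV1]
  set c : n → n → ℝ := fun k j => Complex.normSq (N k j) with hcdef
  have hr : ∀ k, 0 ≤ r k := fun k => hB.eigenvalues_nonneg k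
  have hc : ∀ k j, 0 ≤ c k j := fun k j => Complex.normSq_nonneg _
  have hrow : ∀ k, ∑ j, c k j = 1 := fun k => unitary_row_sum N hN1 k
  have hcol : ∀ j, ∑ k, c k j = 1 := fun j => unitary_col_sum N hN2 j
  have hdiag : ∀ j, (dotProduct (star (V *ᵥ Pi.single j 1))
      (B *ᵥ (V *ᵥ Pi.single j 1))).re = ∑ k, r k * c k j := by
    intro j
    rw [rep_quad_re U r B hspec]
    congr 1; funext k
    rw [show (Uᴴ *ᵥ V *ᵥ Pi.single j 1) k = N k j from by
      rw [Matrix.mulVec_mulVec, ← hNdef, mulVec_single_one]]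
  calc ∑ j, (dotProduct (star (V *ᵥ Pi.single j 1))
        (B *ᵥ (V *ᵥ Pi.single j 1))).re * Real.log (s j)
      = ∑ j, (∑ k, r k * c k j) * Real.log (s j) := by
        congr 1; funext j; rw [hdiag j]
    _ ≤ ∑ k, r k * Real.log (r k) := scalar_gibbs r s c hr hs hc hrow hcol hsum

lemma real_smul_eq (c : ℝ) (M : Matrix n n ℂ) : c • M = (c : ℂ) • M := by
  ext i j
  simp [Complex.real_smul]

lemma real_smul_one (c : ℝ) : c • (1 : Matrix n n ℂ) = Matrix.diagonal (fun _ => (c : ℂ)) := by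
  rw [real_smul_eq]
  ext i j
  by_cases h : i = j <;> simp [Matrix.one_apply, Matrix.diagonal_apply, h]

lemma smul_posDef {c : ℝ} (hc : 0 < c) {M : Matrix n n ℂ} (hM : M.PosDef) :
    (c • M).PosDef := by
  rw [real_smul_eq]
  refine Matrix.PosDef.of_dotProduct_mulVec_pos ?_ ?_
  · show ((c : ℂ) • M)ᴴ = _
    rw [Matrix.conjTranspose_smul, hM.1.eq]
    congr 1
    simp
  · intro x hx
    have h := hM.dotProduct_mulVec_pos hx
    rw [Matrix.smul_mulVec, dotProduct_smul]
    rw [Complex.lt_def] at h ⊢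
    constructor
    · simp only [Complex.zero_re, smul_eq_mul, Complex.mul_re, Complex.ofReal_re,
        Complex.ofReal_im, zero_mul, sub_zero] at h ⊢
      exact mul_pos hc h.1
    · simp only [Complex.zero_im, smul_eq_mul, Complex.mul_im, Complex.ofReal_re,
        Complex.ofReal_im, zero_mul, add_zero] at h ⊢
      rw [← h.2]; ring

lemma smul_posSemidef {c : ℝ} (hc : 0 ≤ c) {M : Matrix n n ℂ} (hM : M.PosSemidef) :
    (c • M).PosSemidef := by
  rw [real_smul_eq]
  refine Matrix.PosSemidef.of_dotProduct_mulVec_nonneg ?_ ?_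
  · show ((c : ℂ) • M)ᴴ = _
    rw [Matrix.conjTranspose_smul, hM.1.eq]
    congr 1
    simp
  · intro x
    have h := hM.dotProduct_mulVec_nonneg x
    rw [Matrix.smul_mulVec, dotProduct_smul]
    rw [Complex.le_def] at h ⊢
    constructor
    · simp only [Complex.zero_re, smul_eq_mul, Complex.mul_re, Complex.ofReal_re,
        Complex.ofReal_im, zero_mul, sub_zero] at h ⊢
      exact mul_nonneg hc h.1
    · simp only [Complex.zero_im, smul_eq_mul, Complex.mul_im, Complex.ofReal_re,
        Complex.ofReal_im, zero_mul, add_zero] at h ⊢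
      rw [← h.2]; ring

lemma sum_quad_eq_trace (W M : Matrix n n ℂ) :
    ∑ ξ, dotProduct (star (W *ᵥ Pi.single ξ 1)) (M *ᵥ (W *ᵥ Pi.single ξ 1))
      = (Wᴴ * M * W).trace := by
  rw [Matrix.trace]
  congr 1; funext ξ
  rw [dot_single, Matrix.mulVec_mulVec, Matrix.mulVec_mulVec, mulVec_single_one]
  rfl

lemma trace_unitary_conj (W M : Matrix n n ℂ) (hW2 : W * Wᴴ = 1) :
    (Wᴴ * M * W).trace = M.trace := by
  rw [Matrix.trace_mul_cycle, hW2, Matrix.one_mul]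

lemma re_quad_mono {A B : Matrix n n ℂ} (h : (B - A).PosSemidef) (v : n → ℂ) :
    (dotProduct (star v) (A *ᵥ v)).re ≤ (dotProduct (star v) (B *ᵥ v)).re := by
  have h0 := h.re_dotProduct_nonneg v
  rw [Matrix.sub_mulVec, dotProduct_sub] at h0
  simp only [map_sub, RCLike.re_to_complex] at h0
  linarith

lemma trace_re_eq_sum_eig {M : Matrix n n ℂ} (hM : M.IsHermitian) :
    M.trace.re = ∑ i, hM.eigenvalues i := by
  rw [trace_eq_sum_eig hM]
  rw [← Complex.ofReal_sum]
  exact Complex.ofReal_re _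

lemma ofReal_nonneg' {x : ℝ} (h : 0 ≤ x) : 0 ≤ (x : ℂ) :=
  Complex.zero_le_real.mpr h

lemma ofReal_pos' {x : ℝ} (h : 0 < x) : 0 < (x : ℂ) := by
  rw [Complex.lt_def]
  constructor
  · simpa using h
  · simp

lemma diag_psd (d : ℝ) (hd : 0 ≤ d) {n : Type*} [Fintype n] [DecidableEq n] :
    (Matrix.diagonal (fun _ : n => (d : ℂ))).PosSemidef :=
  Matrix.PosSemidef.diagonal (Pi.le_def.mpr fun _ => ofReal_nonneg' hd)

lemma parseval (U : Matrix n n ℂ) (hU2 : U * Uᴴ = 1) (v : n → ℂ) :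
    dotProduct (star v) v = ∑ i, (Complex.normSq ((Uᴴ *ᵥ v) i) : ℂ) := by
  have hrep : (1 : Matrix n n ℂ) = U * Matrix.diagonal (fun _ : n => ((1 : ℝ) : ℂ)) * Uᴴ := by
    have : Matrix.diagonal (fun _ : n => ((1 : ℝ) : ℂ)) = 1 := by
      simp [Matrix.diagonal_one]
    rw [this, Matrix.mul_one, hU2]
  have := rep_quad U (fun _ => (1 : ℝ)) 1 hrep v
  rw [Matrix.one_mulVec] at this
  rw [this]
  congr 1; funext i
  push_cast
  ring

lemma psd_trace_real {M : Matrix n n ℂ} (hM : M.PosSemidef) :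
    M.trace = ((M.trace.re : ℝ) : ℂ) ∧ 0 ≤ M.trace.re := by
  have hdiag : ∀ k, 0 ≤ M k k ∧ (M k k).im = 0 := by
    intro k
    have h := hM.dotProduct_mulVec_nonneg (Pi.single k 1)
    have he : dotProduct (star (Pi.single k 1)) (M *ᵥ Pi.single k 1) = M k k := by
      rw [mulVec_single_one]
      simp [dotProduct, Pi.single_apply, apply_ite]
    rw [he] at h
    exact ⟨h, ((Complex.le_def.mp h).2).symm⟩
  have him : M.trace.im = 0 := by
    rw [Matrix.trace]
    rw [show (∑ k, M.diag k).im = ∑ k, (M k k).im from Complex.im_sum _ _]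
    exact Finset.sum_eq_zero fun k _ => (hdiag k).2
  constructor
  · exact Complex.ext (by simp) (by simp [him])
  · rw [Matrix.trace, show (∑ k, M.diag k).re = ∑ k, (M k k).re from Complex.re_sum _ _]
    exact Finset.sum_nonneg fun k _ => (Complex.le_def.mp (hdiag k).1).1

lemma psd_le_one {M : Matrix n n ℂ} (hM : M.PosSemidef) (h1 : M.trace = 1) :
    ((1 : Matrix n n ℂ) - M).PosSemidef := by
  classical
  set U : Matrix n n ℂ := (hM.1.eigenvectorUnitary : Matrix n n ℂ)
  have hU2 : U * Uᴴ = 1 := eigU_mul_star hM.1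
  set p : n → ℝ := hM.1.eigenvalues with hpdef
  have hp : ∀ i, 0 ≤ p i := fun i => hM.eigenvalues_nonneg i
  have hpsum : ∑ i, p i = 1 := by
    have h := trace_re_eq_sum_eig hM.1
    rw [h1] at h
    simpa using h.symm
  have hple : ∀ i, p i ≤ 1 := by
    intro i
    rw [← hpsum]
    exact Finset.single_le_sum (fun j _ => hp j) (Finset.mem_univ i)
  refine Matrix.PosSemidef.of_dotProduct_mulVec_nonneg (Matrix.isHermitian_one.sub hM.1) fun v => ?_
  rw [Matrix.sub_mulVec, dotProduct_sub, Matrix.one_mulVec]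
  rw [rep_quad U p M (spec_decomp hM.1) v, parseval U hU2 v, ← Finset.sum_sub_distrib]
  apply Finset.sum_nonneg
  intro i _
  have : ((Complex.normSq ((Uᴴ *ᵥ v) i) : ℂ)) - (p i : ℂ) * (Complex.normSq ((Uᴴ *ᵥ v) i) : ℂ)
      = (((1 - p i) * Complex.normSq ((Uᴴ *ᵥ v) i) : ℝ) : ℂ) := by
    push_cast
    ring
  rw [this, Complex.zero_le_real]
  exact mul_nonneg (by linarith [hple i]) (Complex.normSq_nonneg _)

section PTrace

variable {a b : Type*} [Fintype a] [DecidableEq a] [Fintype b] [DecidableEq b]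

/-- the partial trace over `a` -/
noncomputable def ptr (ρ : Matrix (a × b) (a × b) ℂ) : Matrix b b ℂ :=
  Matrix.of fun k k' : b => ∑ i : a, ρ (i, k) (i, k')

lemma ptr_isHermitian {ρ : Matrix (a × b) (a × b) ℂ} (hρ : ρ.IsHermitian) :
    (ptr ρ).IsHermitian := by
  ext k k'
  simp only [Matrix.conjTranspose_apply, ptr, Matrix.of_apply, star_sum]
  congr 1; funext i
  exact congrFun (congrFun hρ (i, k)) (i, k')

/-- embedding of a `b`-vector in slot `w` -/
def emb (w : a) (v : b → ℂ) : a × b → ℂ := fun q => if q.1 = w then v q.2 else 0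

lemma emb_quad (ρ : Matrix (a × b) (a × b) ℂ) (v : b → ℂ) (w : a) :
    dotProduct (star (emb w v)) (ρ *ᵥ emb w v)
      = ∑ k, ∑ k', starRingEnd ℂ (v k) * ρ (w, k) (w, k') * v k' := by
  unfold emb
  simp only [dotProduct, Matrix.mulVec, Pi.star_apply, Fintype.sum_prod_type]
  rw [Finset.sum_eq_single w (fun i _ hi => by simp [hi])
    (fun h => absurd (Finset.mem_univ w) h)]
  congr 1; funext k
  rw [Finset.sum_eq_single w (fun i _ hi => by simp [hi])
    (fun h => absurd (Finset.mem_univ w) h)]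
  simp only [if_pos rfl, if_true, eq_self_iff_true]
  rw [Finset.mul_sum]
  congr 1; funext k'
  rw [Complex.star_def]
  ring

lemma sum_emb_quad (ρ : Matrix (a × b) (a × b) ℂ) (v : b → ℂ) :
    ∑ w : a, dotProduct (star (emb w v)) (ρ *ᵥ emb w v)
      = dotProduct (star v) ((ptr ρ) *ᵥ v) := by
  simp_rw [emb_quad]
  rw [Finset.sum_comm]
  simp only [dotProduct, Matrix.mulVec, ptr, Matrix.of_apply, Pi.star_apply]
  congr 1; funext k
  rw [Finset.sum_comm]
  simp only [Finset.mul_sum, Finset.sum_mul]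
  congr 1; funext k'
  congr 1; funext i
  rw [Complex.star_def]
  ring

lemma ptr_posSemidef {ρ : Matrix (a × b) (a × b) ℂ} (hρ : ρ.PosSemidef) :
    (ptr ρ).PosSemidef := by
  refine Matrix.PosSemidef.of_dotProduct_mulVec_nonneg (ptr_isHermitian hρ.1) fun v => ?_
  rw [← sum_emb_quad]
  exact Finset.sum_nonneg fun w _ => hρ.dotProduct_mulVec_nonneg (emb w v)

lemma ptr_trace (ρ : Matrix (a × b) (a × b) ℂ) : (ptr ρ).trace = ρ.trace := by
  simp only [Matrix.trace, Matrix.diag, ptr, Matrix.of_apply, Fintype.sum_prod_type]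
  rw [Finset.sum_comm]

lemma kron_conjTranspose (V : Matrix b b ℂ) :
    ((1 : Matrix a a ℂ) ⊗ₖ V)ᴴ = (1 : Matrix a a ℂ) ⊗ₖ Vᴴ := by
  ext ⟨i, k⟩ ⟨w, j⟩
  show star ((1 : Matrix a a ℂ) w i * V j k) = (1 : Matrix a a ℂ) i w * star (V j k)
  by_cases h : w = i
  · subst h; simp [Matrix.one_apply]
  · simp [Matrix.one_apply, h, Ne.symm h]

lemma kron_unitary_left (V : Matrix b b ℂ) (hV1 : Vᴴ * V = 1) :
    ((1 : Matrix a a ℂ) ⊗ₖ V)ᴴ * ((1 : Matrix a a ℂ) ⊗ₖ V) = 1 := by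
  rw [kron_conjTranspose, ← Matrix.mul_kronecker_mul, Matrix.one_mul, hV1,
    Matrix.one_kronecker_one]

lemma kron_unitary_right (V : Matrix b b ℂ) (hV2 : V * Vᴴ = 1) :
    ((1 : Matrix a a ℂ) ⊗ₖ V) * ((1 : Matrix a a ℂ) ⊗ₖ V)ᴴ = 1 := by
  rw [kron_conjTranspose, ← Matrix.mul_kronecker_mul, Matrix.one_mul, hV2,
    Matrix.one_kronecker_one]

lemma kron_col (V : Matrix b b ℂ) (w : a) (j : b) :
    ((1 : Matrix a a ℂ) ⊗ₖ V) *ᵥ Pi.single (w, j) 1 = emb w (V *ᵥ Pi.single j 1) := by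
  funext ⟨i, k⟩
  rw [mulVec_single_one]
  show (1 : Matrix a a ℂ) i w * V k j = emb w (V *ᵥ Pi.single j 1) (i, k)
  rw [emb, mulVec_single_one]
  by_cases h : i = w <;> simp [Matrix.one_apply, h]

lemma tau_rep (V : Matrix b b ℂ) (σ : Matrix b b ℂ) (s : b → ℝ) (c : ℝ)
    (hσspec : σ = V * Matrix.diagonal (fun j => (s j : ℂ)) * Vᴴ) :
    c • ((1 : Matrix a a ℂ) ⊗ₖ σ)
      = ((1 : Matrix a a ℂ) ⊗ₖ V)
        * Matrix.diagonal (fun ξ : a × b => ((c * s ξ.2 : ℝ) : ℂ))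
        * ((1 : Matrix a a ℂ) ⊗ₖ V)ᴴ := by
  rw [kron_conjTranspose]
  have h1 : Matrix.diagonal (fun ξ : a × b => ((c * s ξ.2 : ℝ) : ℂ))
      = (1 : Matrix a a ℂ) ⊗ₖ Matrix.diagonal (fun j => ((c * s j : ℝ) : ℂ)) := by
    rw [← Matrix.diagonal_one, Matrix.diagonal_kronecker_diagonal]
    simp only [one_mul]
  rw [h1, ← Matrix.mul_kronecker_mul, ← Matrix.mul_kronecker_mul, Matrix.one_mul,
    Matrix.one_mul]
  have h2 : V * Matrix.diagonal (fun j => ((c * s j : ℝ) : ℂ)) * Vᴴ = (c : ℂ) • σ := by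
    have h3 : Matrix.diagonal (fun j => ((c * s j : ℝ) : ℂ))
        = (c : ℂ) • Matrix.diagonal (fun j => (s j : ℂ)) := by
      ext i j
      rcases eq_or_ne i j with h | h
      · subst h
        simp only [Matrix.diagonal_apply_eq, Matrix.smul_apply, smul_eq_mul]
        push_cast; ring
      · simp [Matrix.diagonal_apply_ne _ h]
    rw [h3, Matrix.mul_smul, Matrix.smul_mul, hσspec]
  rw [h2, Matrix.kronecker_smul, real_smul_eq]

lemma vnEntropy_eq {n : Type*} [Fintype n] [DecidableEq n]
    {M : Matrix n n ℂ} (hM : M.IsHermitian) :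
    vnEntropy M = -((∑ i, hM.eigenvalues i * Real.log (hM.eigenvalues i)) / Real.log 2) := by
  unfold vnEntropy
  rw [dif_pos hM]
  rw [neg_inj]
  simp_rw [Real.logb, ← mul_div_assoc]
  rw [Finset.sum_div]

lemma part1_pd (ρ : Matrix (a × b) (a × b) ℂ) (hρ : ρ.PosSemidef) (hρ1 : ρ.trace = 1)
    (lam : ℝ) (σ : Matrix b b ℂ) (hσ : σ.PosDef) (hσ1 : σ.trace = 1)
    (hP : (((2 : ℝ) ^ (-lam)) • ((1 : Matrix a a ℂ) ⊗ₖ σ) - ρ).PosSemidef) :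
    lam ≤ vnEntropy ρ - vnEntropy (ptr ρ) := by
  classical
  set c : ℝ := (2 : ℝ) ^ (-lam) with hc
  have hcpos : 0 < c := Real.rpow_pos_of_pos two_pos _
  set V : Matrix b b ℂ := (hσ.1.eigenvectorUnitary : Matrix b b ℂ) with hVdef
  have hV1 : Vᴴ * V = 1 := star_mul_eigU hσ.1
  have hV2 : V * Vᴴ = 1 := eigU_mul_star hσ.1
  set s : b → ℝ := hσ.1.eigenvalues with hsdef
  have hs : ∀ j, 0 < s j := fun j => hσ.eigenvalues_pos j
  have hssum : ∑ j, s j = 1 := by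
    have h := trace_re_eq_sum_eig hσ.1
    rw [hσ1] at h
    simpa using h.symm
  set W : Matrix (a × b) (a × b) ℂ := (1 : Matrix a a ℂ) ⊗ₖ V with hWdef
  have hW1 : Wᴴ * W = 1 := kron_unitary_left V hV1
  have hW2 : W * Wᴴ = 1 := kron_unitary_right V hV2
  set t : a × b → ℝ := fun ξ => c * s ξ.2 with htdef
  have ht : ∀ ξ, 0 < t ξ := fun ξ => mul_pos hcpos (hs ξ.2)
  have hτrep : c • ((1 : Matrix a a ℂ) ⊗ₖ σ)
      = W * Matrix.diagonal (fun ξ : a × b => ((t ξ : ℝ) : ℂ)) * Wᴴ :=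
    tau_rep V σ s c (spec_decomp hσ.1)
  have hle : ∀ v : (a × b) → ℂ, (dotProduct (star v) (ρ *ᵥ v)).re
      ≤ (dotProduct (star v) ((c • ((1 : Matrix a a ℂ) ⊗ₖ σ)) *ᵥ v)).re :=
    fun v => re_quad_mono hP v
  have hmain := main_ineq hρ W hW1 hW2 t ht hτrep hle
  set p : a × b → ℝ := hρ.1.eigenvalues with hpdef
  have hpsum : ∑ i, p i = 1 := by
    have h := trace_re_eq_sum_eig hρ.1
    rw [hρ1] at h
    simpa using h.symm
  have hB : (ptr ρ).PosSemidef := ptr_posSemidef hρ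
  set r : b → ℝ := hB.1.eigenvalues with hrdef
  have hrsum : ∑ k, r k = 1 := by
    have h := trace_re_eq_sum_eig hB.1
    rw [ptr_trace, hρ1] at h
    simpa using h.symm
  set Q : a × b → ℝ := fun ξ => (dotProduct (star (W *ᵥ Pi.single ξ 1))
    (ρ *ᵥ (W *ᵥ Pi.single ξ 1))).re with hQdef
  have hQsum : ∑ ξ, Q ξ = 1 := by
    rw [hQdef, ← Complex.re_sum, sum_quad_eq_trace W ρ, trace_unitary_conj W ρ hW2, hρ1]
    simp
  set g : b → ℝ := fun j => (dotProduct (star (V *ᵥ Pi.single j 1))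
    ((ptr ρ) *ᵥ (V *ᵥ Pi.single j 1))).re with hgdef
  have hg : ∀ j, ∑ w, Q (w, j) = g j := by
    intro j
    rw [hQdef, hgdef]
    simp only []
    simp_rw [hWdef, kron_col V _ j]
    rw [← Complex.re_sum, sum_emb_quad]
  have hsplit : ∑ ξ, Q ξ * Real.log (t ξ)
      = -(lam * Real.log 2) + ∑ j, g j * Real.log (s j) := by
    have hlog : ∀ ξ : a × b, Real.log (t ξ) = -(lam * Real.log 2) + Real.log (s ξ.2) := by
      intro ξ
      rw [htdef]
      show Real.log (c * s ξ.2) = _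
      rw [Real.log_mul hcpos.ne' (hs ξ.2).ne', hc, Real.log_rpow two_pos]
      ring
    simp_rw [hlog, mul_add]
    rw [Finset.sum_add_distrib, ← Finset.sum_mul, hQsum, one_mul]
    congr 1
    rw [Fintype.sum_prod_type]
    rw [Finset.sum_comm]
    congr 1; funext j
    have e : ∑ w, Q (w, j) * Real.log (s (w, j).2)
        = ∑ w, Q (w, j) * Real.log (s j) := rfl
    rw [e, ← Finset.sum_mul, hg j]
  have hgibbs : ∑ j, g j * Real.log (s j) ≤ ∑ k, r k * Real.log (r k) := by
    have := gibbs_ineq hB V hV1 hV2 s hs (by rw [hssum, hrsum])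
    simpa [hgdef] using this
  have hfin : ∑ i, p i * Real.log (p i)
      ≤ -(lam * Real.log 2) + ∑ k, r k * Real.log (r k) := by
    calc ∑ i, p i * Real.log (p i) ≤ ∑ ξ, Q ξ * Real.log (t ξ) := hmain
      _ = -(lam * Real.log 2) + ∑ j, g j * Real.log (s j) := hsplit
      _ ≤ -(lam * Real.log 2) + ∑ k, r k * Real.log (r k) := by linarith
  rw [vnEntropy_eq hρ.1, vnEntropy_eq hB.1]
  have hlog2 : 0 < Real.log 2 := Real.log_pos one_lt_two
  have e2 : -((∑ i, p i * Real.log (p i)) / Real.log 2)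
      - -((∑ k, r k * Real.log (r k)) / Real.log 2)
      = (∑ k, r k * Real.log (r k) - ∑ i, p i * Real.log (p i)) / Real.log 2 := by
    ring
  rw [e2, le_div_iff₀ hlog2]
  linarith

/-- general version of part 1, for positive semidefinite `σ`. -/
lemma part1 (ρ : Matrix (a × b) (a × b) ℂ) (hρ : ρ.PosSemidef) (hρ1 : ρ.trace = 1)
    (lam : ℝ) (σ : Matrix b b ℂ) (hσ : σ.PosSemidef) (hσ1 : σ.trace = 1)
    (hP : (((2 : ℝ) ^ (-lam)) • ((1 : Matrix a a ℂ) ⊗ₖ σ) - ρ).PosSemidef) :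
    lam ≤ vnEntropy ρ - vnEntropy (ptr ρ) := by
  classical
  have hbne : Nonempty b := by
    by_contra h
    rw [not_nonempty_iff] at h
    rw [show σ.trace = 0 from by simp [Matrix.trace]] at hσ1
    exact absurd hσ1 (by norm_num)
  set c : ℝ := (2 : ℝ) ^ (-lam) with hc
  have hcpos : 0 < c := Real.rpow_pos_of_pos two_pos _
  set m : ℝ := (Fintype.card b : ℝ) with hm
  have hm1 : 1 ≤ m := by
    rw [hm]
    exact_mod_cast Fintype.card_pos
  have hm0 : 0 < m := by linarith
  apply le_of_forall_pos_le_add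
  intro δ hδ
  set k : ℝ := (2 : ℝ) ^ δ with hk
  have hk1 : 1 < k := by
    rw [hk, show (1 : ℝ) = (2 : ℝ) ^ (0 : ℝ) from (Real.rpow_zero 2).symm]
    exact Real.rpow_lt_rpow_of_exponent_lt one_lt_two hδ
  have hkpos : 0 < k := by linarith
  set ε : ℝ := (k - 1) / m with hε
  have hεpos : 0 < ε := div_pos (by linarith) hm0
  have hεm : ε * m = k - 1 := by
    rw [hε]; field_simp
  set σ₂ : Matrix b b ℂ := σ + ε • (1 : Matrix b b ℂ) with hσ₂
  have hσ₂PD : σ₂.PosDef := by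
    rw [hσ₂, real_smul_one]
    exact Matrix.PosDef.posSemidef_add hσ
      (Matrix.PosDef.diagonal fun _ => ofReal_pos' hεpos)
  set σ' : Matrix b b ℂ := k⁻¹ • σ₂ with hσ'
  have hσ'PD : σ'.PosDef := smul_posDef (inv_pos.mpr hkpos) hσ₂PD
  have hσ'1 : σ'.trace = 1 := by
    rw [hσ', Matrix.trace_smul, hσ₂, Matrix.trace_add, Matrix.trace_smul, Matrix.trace_one,
      hσ1]
    have : (1 : ℂ) + ε • (Fintype.card b : ℂ) = (k : ℂ) := by
      rw [Complex.real_smul]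
      rw [show ((Fintype.card b : ℕ) : ℂ) = ((m : ℝ) : ℂ) from by rw [hm]; push_cast; rfl]
      rw [show ((ε : ℝ) : ℂ) * ((m : ℝ) : ℂ) = (((ε * m : ℝ)) : ℂ) from by push_cast; ring]
      rw [hεm]
      push_cast
      ring
    rw [this, Complex.real_smul]
    rw [show ((k⁻¹ : ℝ) : ℂ) * (k : ℂ) = ((k⁻¹ * k : ℝ) : ℂ) from by push_cast; ring]
    rw [inv_mul_cancel₀ hkpos.ne']
    norm_num
  have hkey : ((2 : ℝ) ^ (-(lam - δ))) • ((1 : Matrix a a ℂ) ⊗ₖ σ') - ρ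
      = (c • ((1 : Matrix a a ℂ) ⊗ₖ σ) - ρ)
        + (c * ε) • (1 : Matrix (a × b) (a × b) ℂ) := by
    have h2 : (2 : ℝ) ^ (-(lam - δ)) = c * k := by
      rw [hc, hk, show -(lam - δ) = -lam + δ from by ring, Real.rpow_add two_pos]
    rw [h2, hσ', Matrix.kronecker_smul, smul_smul,
      show c * k * k⁻¹ = c from by field_simp]
    rw [hσ₂, Matrix.kronecker_add, Matrix.kronecker_smul, Matrix.one_kronecker_one]
    rw [smul_add, smul_smul]
    abel
  have hP' : (((2 : ℝ) ^ (-(lam - δ))) • ((1 : Matrix a a ℂ) ⊗ₖ σ') - ρ).PosSemidef := by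
    rw [hkey]
    refine hP.add ?_
    rw [real_smul_one]
    exact diag_psd _ (by positivity)
  have := part1_pd ρ hρ hρ1 (lam - δ) σ' hσ'PD hσ'1 hP'
  linarith

/-- the `Hmin` set is nonempty. -/
lemma hmin_mem (ρ : Matrix (a × b) (a × b) ℂ) (hρ : ρ.PosSemidef) (hρ1 : ρ.trace = 1)
    [Nonempty b] :
    (-(Real.logb 2 (Fintype.card b))) ∈ {lam : ℝ | ∃ σ : Matrix b b ℂ, σ.PosSemidef ∧
      σ.trace.re ≤ 1 ∧
      (((2 : ℝ) ^ (-lam)) • ((1 : Matrix a a ℂ) ⊗ₖ σ) - ρ).PosSemidef} := by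
  classical
  set m : ℝ := (Fintype.card b : ℝ) with hm
  have hm1 : 1 ≤ m := by rw [hm]; exact_mod_cast Fintype.card_pos
  have hm0 : 0 < m := by linarith
  refine ⟨(m⁻¹ : ℝ) • (1 : Matrix b b ℂ), ?_, ?_, ?_⟩
  · rw [real_smul_one]
    exact diag_psd _ (by positivity)
  · rw [Matrix.trace_smul, Matrix.trace_one, Complex.real_smul]
    rw [show ((m⁻¹ : ℝ) : ℂ) * ((Fintype.card b : ℕ) : ℂ) = ((m⁻¹ * m : ℝ) : ℂ) from by
      rw [hm]; push_cast; ring]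
    rw [inv_mul_cancel₀ hm0.ne']
    norm_num
  · have h2 : (2 : ℝ) ^ (-(-(Real.logb 2 (Fintype.card b)))) = m := by
      rw [neg_neg, hm]
      exact Real.rpow_logb two_pos (by norm_num) hm0
    rw [h2, Matrix.kronecker_smul, smul_smul, mul_inv_cancel₀ hm0.ne',
      Matrix.one_kronecker_one, one_smul]
    exact psd_le_one hρ hρ1

lemma part2 (ρ : Matrix (a × b) (a × b) ℂ) (hρ : ρ.PosSemidef) (hρ1 : ρ.trace = 1) :
    Hmin ρ ≤ vnEntropy ρ - vnEntropy (ptr ρ) := by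
  classical
  have hne : Nonempty (a × b) := by
    by_contra h
    rw [not_nonempty_iff] at h
    rw [show ρ.trace = 0 from by simp [Matrix.trace]] at hρ1
    exact absurd hρ1 (by norm_num)
  have hna : Nonempty a := ⟨hne.some.1⟩
  have hnb : Nonempty b := ⟨hne.some.2⟩
  rw [Hmin]
  apply csSup_le ⟨_, hmin_mem ρ hρ hρ1⟩
  rintro lam ⟨σ, hσ, hσtr, hP⟩
  set c : ℝ := (2 : ℝ) ^ (-lam) with hc
  have hcpos : 0 < c := Real.rpow_pos_of_pos two_pos _
  set tr : ℝ := σ.trace.re with htr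
  obtain ⟨hσre, hσnn⟩ := psd_trace_real hσ
  have hca : (0 : ℝ) < (Fintype.card a : ℝ) := by exact_mod_cast Fintype.card_pos
  have htrace_ineq : 0 ≤ c * ((Fintype.card a : ℝ) * tr) - 1 := by
    have h0 := (psd_trace_real hP).2
    rw [Matrix.trace_sub, Matrix.trace_smul, Matrix.trace_kronecker, Matrix.trace_one,
      hρ1] at h0
    rw [Complex.sub_re, Complex.real_smul, Complex.one_re] at h0
    have : ((c : ℝ) : ℂ) * ((Fintype.card a : ℕ) : ℂ) * σ.trace
        = (((c * (Fintype.card a : ℝ) * tr) : ℝ) : ℂ) := by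
      rw [hσre]
      push_cast
      ring
    rw [show ((c : ℝ) : ℂ) * (((Fintype.card a : ℕ) : ℂ) * σ.trace)
        = ((c : ℝ) : ℂ) * ((Fintype.card a : ℕ) : ℂ) * σ.trace from by ring, this] at h0
    rw [Complex.ofReal_re] at h0
    linarith
  have htrpos : 0 < tr := by nlinarith [mul_pos hcpos hca]
  set σ'' : Matrix b b ℂ := (tr⁻¹ : ℝ) • σ with hσ''
  have hσ''psd : σ''.PosSemidef := smul_posSemidef (inv_nonneg.mpr htrpos.le) hσ
  have hσ''1 : σ''.trace = 1 := by
    rw [hσ'', Matrix.trace_smul, hσre, Complex.real_smul]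
    rw [show ((tr⁻¹ : ℝ) : ℂ) * ((tr : ℝ) : ℂ) = ((tr⁻¹ * tr : ℝ) : ℂ) from by push_cast; ring]
    rw [inv_mul_cancel₀ htrpos.ne']
    norm_num
  set lam'' : ℝ := lam - Real.logb 2 tr with hlam''
  have hP'' : (((2 : ℝ) ^ (-lam'')) • ((1 : Matrix a a ℂ) ⊗ₖ σ'') - ρ).PosSemidef := by
    have h2 : (2 : ℝ) ^ (-lam'') = c * tr := by
      rw [hlam'', show -(lam - Real.logb 2 tr) = -lam + Real.logb 2 tr from by ring,
        Real.rpow_add two_pos, Real.rpow_logb two_pos (by norm_num) htrpos, hc]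
    rw [h2, hσ'', Matrix.kronecker_smul, smul_smul,
      show c * tr * tr⁻¹ = c from by field_simp]
    exact hP
  have hmain := part1 ρ hρ hρ1 lam'' σ'' hσ''psd hσ''1 hP''
  have hlogb : Real.logb 2 tr ≤ 0 := Real.logb_nonpos one_lt_two htrpos.le hσtr
  have : lam ≤ lam'' := by rw [hlam'']; linarith
  linarith

end PTrace

end HminAux

/-- The conditional min-entropy is at most the conditional von Neumann
entropy: for a bipartite density operator `ρ^{AB}`, whenever
`ρ ≤ 2^{-λ} 𝟙_A ⊗ σ_B` for a density operator `σ_B` one has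
`λ ≤ S(AB)_ρ − S(B)_ρ`; equivalently `H_min(A|B)_ρ ≤ S(A|B)_ρ`. -/
theorem Hmin_le_conditional_entropy {a b : Type*}
    [Fintype a] [DecidableEq a] [Fintype b] [DecidableEq b]
    (ρ : Matrix (a × b) (a × b) ℂ) (hρ : ρ.PosSemidef) (hρ1 : ρ.trace = 1) :
    (∀ (lam : ℝ) (σ : Matrix b b ℂ), σ.PosSemidef → σ.trace = 1 →
      (((2 : ℝ) ^ (-lam)) • ((1 : Matrix a a ℂ) ⊗ₖ σ) - ρ).PosSemidef →
      lam ≤ vnEntropy ρ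
        - vnEntropy (Matrix.of fun k k' : b => ∑ i : a, ρ (i, k) (i, k'))) ∧
    Hmin ρ ≤ vnEntropy ρ
        - vnEntropy (Matrix.of fun k k' : b => ∑ i : a, ρ (i, k) (i, k')) := by
  constructor
  · intro lam σ hσ hσ1 hP
    exact HminAux.part1 ρ hρ hρ1 lam σ hσ hσ1 hP
  · exact HminAux.part2 ρ hρ hρ1
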